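/- arXiv:2307.09116 — 13 statements merged into one kernel-verified Lean document; each statement's English description precedes it below -/
import Mathlib

section
/- For every mutually unbiased qubit measurement pair {Π_{b|y}}, there exist qubit states ρ_0, ρ_1, ρ_2 such that for all a,b,x,y ∈ {0,1}: P(a,b|x,y) = (1/2) · P_D^{00}(a|x) · Tr(Π_{b|y} ρ_0) + (1/4) · P_D^{10}(a|x) · Tr(Π_{b|y} ρ_1) + (1/4) · P_D^{11}(a|x) · Tr(Π_{b|y} ρ_2). In particular, the box P admits an LHV-LHS decomposition from Alice to Bob with hidden variable of dimension 3. -/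
open Matrix Kronecker ComplexOrder

noncomputable section

/-- The box `P(a,b|x,y)`:
`P(·|0,0) = (1/2, 1/4, 0, 1/4)`, `P(·|0,1) = (3/8, 3/8, 1/8, 1/8)`,
`P(·|1,0) = (1/4, 1/2, 1/4, 0)`, `P(·|1,1) = (3/8, 3/8, 1/8, 1/8)`. -/
def Pbox (a b x y : Fin 2) : ℝ :=
  if y = 1 then (if a = 0 then 3/8 else 1/8)
  else if x = 0 then
    (if a = 0 then (if b = 0 then 1/2 else 1/4) else (if b = 0 then 0 else 1/4))
  else
    (if a = 0 then (if b = 0 then 1/4 else 1/2) else (if b = 0 then 1/4 else 0))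

/-- Deterministic one-party box `P_D^{αβ}(a|x) = 1` iff `a = α·x ⊕ β`. -/
def PD (α β : Fin 2) (a x : Fin 2) : ℝ := if a = α * x + β then 1 else 0

/-- A conditional distribution (one-party box): `Q b y ≥ 0` and `Q 0 y + Q 1 y = 1`. -/
def IsCondDistrib (Q : Fin 2 → Fin 2 → ℝ) : Prop :=
  (∀ b y, 0 ≤ Q b y) ∧ ∀ y, Q 0 y + Q 1 y = 1

/-- A qubit state: a 2×2 complex positive semidefinite matrix of trace 1. -/
def IsQubitState (ρ : Matrix (Fin 2) (Fin 2) ℂ) : Prop :=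
  ρ.PosSemidef ∧ ρ.trace = 1

/-- A rank-one orthogonal projection on ℂ²: Hermitian, idempotent, trace 1. -/
def IsRankOneProj (M : Matrix (Fin 2) (Fin 2) ℂ) : Prop :=
  M.IsHermitian ∧ M * M = M ∧ M.trace = 1

/-- A mutually unbiased qubit measurement pair `{Π_{b|y}}`: for each input `y`,
`Π_{0|y}, Π_{1|y}` are rank-one orthogonal projections summing to the identity,
and `Tr(Π_{0|0} Π_{0|1}) = 1/2`. -/
def IsMUBPair (Meas : Fin 2 → Fin 2 → Matrix (Fin 2) (Fin 2) ℂ) : Prop :=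
  (∀ b y, IsRankOneProj (Meas b y)) ∧ (∀ y, Meas 0 y + Meas 1 y = 1) ∧
    (Meas 0 0 * Meas 0 1).trace = 1/2

/-!
Take the maximally mixed state `ρ₀ = I/2` for the hidden value on which Alice always outputs `0`,
and the two eigenprojections `ρ₁ = Π_{0|0}`, `ρ₂ = Π_{1|0}` of Bob's measurement `y = 0` for the
hidden values on which Alice outputs `x` and `x ⊕ 1`. On `y = 0` Bob's outcome is then fixed by
orthogonality of `Π_{0|0}` and `Π_{1|0}`, on `y = 1` it is uniform by mutual unbiasedness, and these
are exactly the correlations of `P`.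
-/

lemma Matrix.IsHermitian.posSemidef_of_mul_self_eq {n R : Type*} [Fintype n] [Ring R]
    [PartialOrder R] [StarRing R] [StarOrderedRing R] {M : Matrix n n R} (hM : M.IsHermitian)
    (hidem : M * M = M) : M.PosSemidef := by
  rw [← hidem, ← congrArg (· * M) hM.eq]
  exact posSemidef_conjTranspose_mul_self M

lemma isQubitState_half_smul_one : IsQubitState ((1/2 : ℂ) • 1) := by
  refine ⟨PosSemidef.one.smul (by norm_num [Complex.le_def]), ?_⟩
  rw [trace_smul, trace_one]
  norm_num

lemma IsRankOneProj.isQubitState {M : Matrix (Fin 2) (Fin 2) ℂ} (h : IsRankOneProj M) :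
    IsQubitState M :=
  ⟨h.1.posSemidef_of_mul_self_eq h.2.1, h.2.2⟩

namespace IsMUBPair

variable {Meas : Fin 2 → Fin 2 → Matrix (Fin 2) (Fin 2) ℂ} (h : IsMUBPair Meas)
include h

lemma meas_one_eq_one_sub (y : Fin 2) : Meas 1 y = 1 - Meas 0 y :=
  eq_sub_of_add_eq' (h.2.1 y)

lemma trace_meas_mul_half_smul_one (b y : Fin 2) :
    (Meas b y * ((1/2 : ℂ) • 1)).trace = 1/2 := by
  rw [Matrix.mul_smul, mul_one, trace_smul, (h.1 b y).2.2, smul_eq_mul, mul_one]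

lemma trace_meas_mul_meas_zero (b y b' : Fin 2) :
    (Meas b y * Meas b' 0).trace = if y = 1 then 1/2 else if b = b' then 1 else 0 := by
  have htr (b y) : (Meas b y).trace = 1 := (h.1 b y).2.2
  have hidem : Meas 0 0 * Meas 0 0 = Meas 0 0 := (h.1 0 0).2.1
  have hmub : (Meas 0 1 * Meas 0 0).trace = 1/2 := by rw [trace_mul_comm]; exact h.2.2
  have htr_one : (1 : Matrix (Fin 2) (Fin 2) ℂ).trace = 2 := by simp
  fin_cases b <;> fin_cases y <;> fin_cases b' <;>
    simp only [Fin.zero_eta, Fin.mk_one, Fin.isValue, h.meas_one_eq_one_sub, sub_mul, mul_sub,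
      one_mul, mul_one, trace_sub, hidem, htr, hmub, htr_one] <;> norm_num

end IsMUBPair

/-- for every mutually unbiased qubit measurement pair there are
qubit states `ρ₀, ρ₁, ρ₂` giving an LHV–LHS decomposition of `P` with hidden
variable of dimension 3. -/
theorem stmt_1 (Meas : Fin 2 → Fin 2 → Matrix (Fin 2) (Fin 2) ℂ)
    (hMeas : IsMUBPair Meas) :
    ∃ ρ0 ρ1 ρ2 : Matrix (Fin 2) (Fin 2) ℂ,
      IsQubitState ρ0 ∧ IsQubitState ρ1 ∧ IsQubitState ρ2 ∧
      ∀ a b x y : Fin 2, (Pbox a b x y : ℂ) =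
        (1/2) * (PD 0 0 a x : ℂ) * (Meas b y * ρ0).trace
        + (1/4) * (PD 1 0 a x : ℂ) * (Meas b y * ρ1).trace
        + (1/4) * (PD 1 1 a x : ℂ) * (Meas b y * ρ2).trace := by
  refine ⟨(1/2 : ℂ) • 1, Meas 0 0, Meas 1 0, isQubitState_half_smul_one,
    (hMeas.1 0 0).isQubitState, (hMeas.1 1 0).isQubitState, ?_⟩
  intro a b x y
  simp only [hMeas.trace_meas_mul_half_smul_one, hMeas.trace_meas_mul_meas_zero]
  fin_cases a <;> fin_cases b <;> fin_cases x <;> fin_cases y <;>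
    norm_num [Pbox, PD, show (1 + 1 : Fin 2) = 0 from rfl]

end
end

section
/- There exist weights p(0), p(1) ≥ 0 with p(0) + p(1) = 1 and conditional distributions A_0, A_1 (for Alice) and B_0, B_1 (for Bob) such that P(a,b|x,y) = Σ_{λ∈{0,1}} p(λ) · A_λ(a|x) · B_λ(b|y) for all a,b,x,y ∈ {0,1}. That is, the box P admits a local-hidden-variable decomposition with hidden variable of dimension 2, so P is not superlocal. -/
open Matrix Kronecker ComplexOrder

noncomputable section

/-! With a fair hidden bit `λ`, Alice answers `0` on input `x = λ` and flips a fair coin on the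
other input, while Bob announces `λ` on input `0` and flips a fair coin on input `1`. On `y = 1`
Bob's coin is independent of everything, and on `y = 0` Bob reveals which of Alice's inputs is
deterministic; averaging over `λ` reproduces `P` entry by entry. -/

theorem isCondDistrib_PD (α β : Fin 2) : IsCondDistrib (PD α β) := by
  refine ⟨fun b y => by unfold PD; split_ifs <;> norm_num, fun y => ?_⟩
  unfold PD
  generalize α * y + β = a
  fin_cases a <;> simp

theorem isCondDistrib_const_half : IsCondDistrib fun _ _ => 1 / 2 :=
  ⟨fun _ _ => by norm_num, fun _ => by norm_num⟩

theorem IsCondDistrib.ite {Q R : Fin 2 → Fin 2 → ℝ} (hQ : IsCondDistrib Q) (hR : IsCondDistrib R)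
    (c : Fin 2 → Prop) [DecidablePred c] :
    IsCondDistrib fun b y => if c y then Q b y else R b y := by
  refine ⟨fun b y => ?_, fun y => ?_⟩ <;> dsimp only <;> split_ifs
  exacts [hQ.1 b y, hR.1 b y, hQ.2 y, hR.2 y]

def lhvAlice (lam : Fin 2) : Fin 2 → Fin 2 → ℝ :=
  fun a x => if x = lam then PD 0 0 a x else 1 / 2

def lhvBob (lam : Fin 2) : Fin 2 → Fin 2 → ℝ :=
  fun b y => if y = 0 then PD 0 lam b y else 1 / 2

theorem isCondDistrib_lhvAlice (lam : Fin 2) : IsCondDistrib (lhvAlice lam) :=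
  (isCondDistrib_PD 0 0).ite isCondDistrib_const_half _

theorem isCondDistrib_lhvBob (lam : Fin 2) : IsCondDistrib (lhvBob lam) :=
  (isCondDistrib_PD 0 lam).ite isCondDistrib_const_half _

theorem Pbox_eq_average_lhv (a b x y : Fin 2) :
    Pbox a b x y = ∑ lam : Fin 2, 1 / 2 * lhvAlice lam a x * lhvBob lam b y := by
  fin_cases a <;> fin_cases b <;> fin_cases x <;> fin_cases y <;>
    norm_num [Pbox, lhvAlice, lhvBob, PD, Fin.sum_univ_two]

/-- the box `P` admits a local-hidden-variable decomposition with
hidden variable of dimension 2 (so `P` is not superlocal). -/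
theorem stmt_4 :
    ∃ (p : Fin 2 → ℝ) (A B : Fin 2 → Fin 2 → Fin 2 → ℝ),
      (∀ lam, 0 ≤ p lam) ∧ p 0 + p 1 = 1 ∧
      (∀ lam, IsCondDistrib (A lam)) ∧ (∀ lam, IsCondDistrib (B lam)) ∧
      ∀ a b x y : Fin 2, Pbox a b x y =
        ∑ lam : Fin 2, p lam * A lam a x * B lam b y :=
  ⟨fun _ => 1 / 2, lhvAlice, lhvBob, fun _ => by norm_num, by norm_num,
    isCondDistrib_lhvAlice, isCondDistrib_lhvBob, Pbox_eq_average_lhv⟩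
end
end

section
/- The two-qubit state ρ = (1/2)(|00⟩⟨00| + |+1⟩⟨+1|) is not a classical-quantum state: there do not exist an orthonormal basis {e_0, e_1} of ℂ², weights q_0, q_1 ≥ 0 with q_0 + q_1 = 1, and qubit states τ_0, τ_1 such that ρ = q_0 · |e_0⟩⟨e_0| ⊗ τ_0 + q_1 · |e_1⟩⟨e_1| ⊗ τ_1. -/
/-!
For a classical-quantum state `∑ᵢ qᵢ |eᵢ⟩⟨eᵢ| ⊗ τᵢ`, every block `(1 ⊗ ⟨k|) ρ (1 ⊗ |l⟩)`
is a linear combination of the commuting projections `|eᵢ⟩⟨eᵢ|`, so any two such blocks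
commute. For our `ρ` the blocks `(0, 0)` and `(1, 1)` are `½ |0⟩⟨0|` and `½ |+⟩⟨+|`, which
do not.
-/

open Matrix Kronecker ComplexOrder

noncomputable section

def ket0 : Fin 2 → ℂ := ![1, 0]
def ket1 : Fin 2 → ℂ := ![0, 1]
def ketPlus : Fin 2 → ℂ := ![(Real.sqrt 2 : ℂ)⁻¹, (Real.sqrt 2 : ℂ)⁻¹]
def ketMinus : Fin 2 → ℂ := ![(Real.sqrt 2 : ℂ)⁻¹, -(Real.sqrt 2 : ℂ)⁻¹]

/-- The outer product `|v⟩⟨v|`. -/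
def outer (v : Fin 2 → ℂ) : Matrix (Fin 2) (Fin 2) ℂ := Matrix.vecMulVec v (star v)

/-- The two-qubit state `ρ = (1/2)(|00⟩⟨00| + |+1⟩⟨+1|)`. -/
def rhoState : Matrix (Fin 2 × Fin 2) (Fin 2 × Fin 2) ℂ :=
  (1/2 : ℂ) • (outer ket0 ⊗ₖ outer ket0 + outer ketPlus ⊗ₖ outer ket1)

/-- The eigenprojections of `σ_z`: `|0⟩⟨0|` (outcome 0, eigenvalue +1) and
`|1⟩⟨1|` (outcome 1, eigenvalue −1). -/
def projZ (a : Fin 2) : Matrix (Fin 2) (Fin 2) ℂ :=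
  if a = 0 then outer ket0 else outer ket1

/-- The eigenprojections of `σ_x`: `|+⟩⟨+|` (outcome 0, eigenvalue +1) and
`|−⟩⟨−|` (outcome 1, eigenvalue −1). -/
def projX (a : Fin 2) : Matrix (Fin 2) (Fin 2) ℂ :=
  if a = 0 then outer ketPlus else outer ketMinus

namespace Matrix

variable {R α β : Type*}

/-- The block `(1 ⊗ ⟨k|) ρ (1 ⊗ |l⟩)` of an operator on a tensor product. -/
def slice (ρ : Matrix (α × β) (α × β) R) (k l : β) : Matrix α α R :=
  ρ.submatrix (·, k) (·, l)

theorem slice_add [Add R] (ρ σ : Matrix (α × β) (α × β) R) (k l : β) :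
    (ρ + σ).slice k l = ρ.slice k l + σ.slice k l :=
  rfl

theorem slice_smul {S : Type*} [SMul S R] (c : S) (ρ : Matrix (α × β) (α × β) R) (k l : β) :
    (c • ρ).slice k l = c • ρ.slice k l :=
  rfl

theorem slice_kronecker [CommSemiring R] (A : Matrix α α R) (B : Matrix β β R) (k l : β) :
    (A ⊗ₖ B).slice k l = B k l • A := by
  ext a b
  simp [slice, mul_comm]

theorem commute_vecMulVec_star_of_dotProduct_eq_zero [CommSemiring R] [StarRing R]
    [Fintype α] {u v : α → R} (huv : star u ⬝ᵥ v = 0) (hvu : star v ⬝ᵥ u = 0) :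
    Commute (vecMulVec u (star u)) (vecMulVec v (star v)) := by
  simp [Commute, SemiconjBy, vecMulVec_mul_vecMulVec, huv, hvu]

end Matrix

theorem Commute.smul_add_smul {R A : Type*} [NonUnitalNonAssocSemiring A] [SMul R A]
    [SMulCommClass R A A] [IsScalarTower R A A] {P Q : A} (h : Commute P Q) (a b c d : R) :
    Commute (a • P + b • Q) (c • P + d • Q) := by
  apply_rules [Commute.add_left, Commute.add_right, Commute.smul_left, Commute.smul_right,
    Commute.refl, Commute.symm]

theorem commute_slice_of_eq_smul_kronecker_add_smul_kronecker {R α β : Type*} [CommSemiring R]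
    [Fintype α] {ρ : Matrix (α × β) (α × β) R} {P Q : Matrix α α R}
    {σ τ : Matrix β β R} {a b : R} (hPQ : Commute P Q)
    (hρ : ρ = a • (P ⊗ₖ σ) + b • (Q ⊗ₖ τ)) (k l k' l' : β) :
    Commute (ρ.slice k l) (ρ.slice k' l') := by
  have hslice : ∀ k l, ρ.slice k l = (a * σ k l) • P + (b * τ k l) • Q := by
    intro k l
    simp only [hρ, slice_add, slice_smul, slice_kronecker, smul_smul]
  rw [hslice, hslice]
  exact hPQ.smul_add_smul _ _ _ _

theorem outer_apply (v : Fin 2 → ℂ) (i j : Fin 2) : outer v i j = v i * star (v j) :=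
  rfl

theorem rhoState_slice_zero_zero : rhoState.slice 0 0 = (1/2 : ℂ) • outer ket0 := by
  rw [rhoState, slice_smul, slice_add, slice_kronecker, slice_kronecker]
  simp [outer_apply, ket0, ket1]

theorem rhoState_slice_one_one : rhoState.slice 1 1 = (1/2 : ℂ) • outer ketPlus := by
  rw [rhoState, slice_smul, slice_add, slice_kronecker, slice_kronecker]
  simp [outer_apply, ket0, ket1]

theorem not_commute_rhoState_slice : ¬ Commute (rhoState.slice 0 0) (rhoState.slice 1 1) := by
  rw [rhoState_slice_zero_zero, rhoState_slice_one_one]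
  intro h
  have hentry := congrFun (congrFun h.eq 0) 1
  simp [outer_apply, ket0, ketPlus, mul_apply, Fin.sum_univ_two] at hentry

/-- `ρ = (1/2)(|00⟩⟨00| + |+1⟩⟨+1|)` is not a classical-quantum
state. -/
theorem stmt_5 :
    ¬ ∃ (e : Fin 2 → Fin 2 → ℂ) (q : Fin 2 → ℝ)
        (τ : Fin 2 → Matrix (Fin 2) (Fin 2) ℂ),
      (∀ i j, (∑ k, star (e i k) * e j k) = if i = j then 1 else 0) ∧
      (∀ i, 0 ≤ q i) ∧ q 0 + q 1 = 1 ∧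
      (∀ i, IsQubitState (τ i)) ∧
      rhoState = (q 0 : ℂ) • (outer (e 0) ⊗ₖ τ 0)
        + (q 1 : ℂ) • (outer (e 1) ⊗ₖ τ 1) := by
  rintro ⟨e, q, τ, horth, -, -, -, hρ⟩
  have hproj : Commute (outer (e 0)) (outer (e 1)) :=
    commute_vecMulVec_star_of_dotProduct_eq_zero (horth 0 1) (horth 1 0)
  exact not_commute_rhoState_slice
    (commute_slice_of_eq_smul_kronecker_add_smul_kronecker hproj hρ 0 0 1 1)
end
end

section
/- There exists an assignment of the Pauli observables σ_z and σ_x to Alice's two inputs x ∈ {0,1} and to Bob's two inputs y ∈ {0,1} (with outcome 0 corresponding to the eigenvalue +1 eigenprojection and outcome 1 to the eigenvalue −1 eigenprojection, giving projections Π_{a|x} for Alice and Π_{b|y} for Bob) such that for all a,b,x,y ∈ {0,1}: Tr((Π_{a|x} ⊗ Π_{b|y}) ρ) = P(a,b|x,y), where ρ = (1/2)(|00⟩⟨00| + |+1⟩⟨+1|). In particular, the box P is produced by local projective measurements on a 2⊗2 (separable, one-way discordant) quantum state. -/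
open Matrix Kronecker ComplexOrder

noncomputable section

/-! `ρ` is an equal mixture of the product states `|0⟩|0⟩` and `|+⟩|1⟩`, so
`Tr((A ⊗ B) ρ) = (⟨0|A|0⟩⟨0|B|0⟩ + ⟨+|A|+⟩⟨1|B|1⟩) / 2`. Let both parties measure `σ_z` on input 0
and `σ_x` on input 1. Since the `σ_z` and `σ_x` eigenbases are mutually unbiased, every Born
probability occurring here is `0`, `1` or `1/2`, and the box is read off entry by entry. -/

theorem trace_kronecker_mul_kronecker {m n R : Type*} [Fintype m] [Fintype n] [CommSemiring R]
    (A C : Matrix m m R) (B D : Matrix n n R) :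
    ((A ⊗ₖ B) * (C ⊗ₖ D)).trace = (A * C).trace * (B * D).trace := by
  rw [← mul_kronecker_mul, trace_kronecker]

theorem trace_kronecker_mul_rhoState (A B : Matrix (Fin 2) (Fin 2) ℂ) :
    ((A ⊗ₖ B) * rhoState).trace = 1/2 * ((A * outer ket0).trace * (B * outer ket0).trace
      + (A * outer ketPlus).trace * (B * outer ket1).trace) := by
  rw [rhoState, mul_smul_comm, mul_add, trace_smul, trace_add, smul_eq_mul,
    trace_kronecker_mul_kronecker, trace_kronecker_mul_kronecker]

theorem trace_outer_mul_outer_of_star_eq {u v : Fin 2 → ℂ} (hu : star u = u) (hv : star v = v) :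
    (outer u * outer v).trace = (u ⬝ᵥ v) ^ 2 := by
  rw [outer, outer, vecMulVec_mul_vecMulVec, trace_vecMulVec, dotProduct_smul, smul_eq_mul, hu, hv,
    dotProduct_comm u v, sq]

theorem star_ket0 : star ket0 = ket0 := by ext i; fin_cases i <;> simp [ket0]

theorem star_ket1 : star ket1 = ket1 := by ext i; fin_cases i <;> simp [ket1]

theorem star_ketPlus : star ketPlus = ketPlus := by ext i; fin_cases i <;> simp [ketPlus]

theorem star_ketMinus : star ketMinus = ketMinus := by ext i; fin_cases i <;> simp [ketMinus]

theorem ofReal_sqrt_two_sq : (Real.sqrt 2 : ℂ) ^ 2 = 2 := by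
  rw [← Complex.ofReal_pow, Real.sq_sqrt zero_le_two]; norm_num

section Overlaps

attribute [local simp] star_ket0 star_ket1 star_ketPlus star_ketMinus
  trace_outer_mul_outer_of_star_eq ofReal_sqrt_two_sq

theorem trace_projZ_mul_outer_ket0 (a : Fin 2) :
    (projZ a * outer ket0).trace = if a = 0 then 1 else 0 := by
  fin_cases a <;> simp [projZ] <;> simp [ket0, ket1]

theorem trace_projZ_mul_outer_ket1 (a : Fin 2) :
    (projZ a * outer ket1).trace = if a = 0 then 0 else 1 := by
  fin_cases a <;> simp [projZ] <;> simp [ket0, ket1]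

theorem trace_projZ_mul_outer_ketPlus (a : Fin 2) :
    (projZ a * outer ketPlus).trace = 1/2 := by
  fin_cases a <;> simp [projZ] <;> simp [ket0, ket1, ketPlus]

theorem trace_projX_mul_outer_ket0 (a : Fin 2) :
    (projX a * outer ket0).trace = 1/2 := by
  fin_cases a <;> simp [projX] <;> simp [ket0, ketPlus, ketMinus]

theorem trace_projX_mul_outer_ket1 (a : Fin 2) :
    (projX a * outer ket1).trace = 1/2 := by
  fin_cases a <;> simp [projX] <;> simp [ket1, ketPlus, ketMinus]

theorem trace_projX_mul_outer_ketPlus (a : Fin 2) :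
    (projX a * outer ketPlus).trace = if a = 0 then 1 else 0 := by
  fin_cases a <;> simp [projX] <;> norm_num [ketPlus, ketMinus, ← sq]

end Overlaps

/-- there is an assignment of the Pauli observables `σ_z`, `σ_x`
to Alice's and Bob's inputs whose local projective measurements on
`ρ = (1/2)(|00⟩⟨00| + |+1⟩⟨+1|)` produce the box `P`. -/
theorem stmt_6 :
    ∃ PA PB : Fin 2 → Fin 2 → Matrix (Fin 2) (Fin 2) ℂ,
      (∀ x, (∀ a, PA a x = projZ a) ∨ (∀ a, PA a x = projX a)) ∧
      (∀ y, (∀ b, PB b y = projZ b) ∨ (∀ b, PB b y = projX b)) ∧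
      ∀ a b x y : Fin 2,
        ((PA a x ⊗ₖ PB b y) * rhoState).trace = (Pbox a b x y : ℂ) := by
  refine ⟨fun a x => if x = 0 then projZ a else projX a,
    fun b y => if y = 0 then projZ b else projX b,
    fun x => by fin_cases x <;> simp, fun y => by fin_cases y <;> simp, ?_⟩
  intro a b x y
  rw [trace_kronecker_mul_rhoState]
  fin_cases a <;> fin_cases b <;> fin_cases x <;> fin_cases y <;>
    norm_num [Pbox, trace_projZ_mul_outer_ket0, trace_projZ_mul_outer_ket1,
      trace_projZ_mul_outer_ketPlus, trace_projX_mul_outer_ket0, trace_projX_mul_outer_ket1,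
      trace_projX_mul_outer_ketPlus]
end
end

section
/- There do not exist weights p(0), p(1) ≥ 0 with p(0) + p(1) = 1, two DISTINCT deterministic one-party boxes D_0, D_1 ∈ {P_D^{00}, P_D^{01}, P_D^{10}, P_D^{11}} for Alice, and arbitrary conditional distributions Q_0, Q_1 for Bob such that P(a,b|x,y) = p(0) · D_0(a|x) · Q_0(b|y) + p(1) · D_1(a|x) · Q_1(b|y) for all a,b,x,y ∈ {0,1}. -/
open Matrix Kronecker ComplexOrder

noncomputable section

/- Summing over Bob's outcome at `y = 0`, Alice's marginal is `P(a = 1|x) = 1/4` for both `x`.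
Since deterministic boxes output `a = 1` with probability `0` or `1`, this forces a single
box, of weight `1/4`, to output `a = 1` at each `x`. It cannot be one box for `x = 0` and the
other for `x = 1`, as the weights would sum to `1/2`; and it cannot be the same box at both
inputs, because `P(1,0|0,0) = P(1,1|1,0) = 0` makes that box's weight vanish. -/

lemma PD_eq_zero_or_eq_one (α β a x : Fin 2) : PD α β a x = 0 ∨ PD α β a x = 1 := by
  unfold PD
  split_ifs <;> simp

lemma eq_zero_or_eq_one_of_mem_PD {D : Fin 2 → Fin 2 → ℝ}
    (hD : D ∈ ({PD 0 0, PD 0 1, PD 1 0, PD 1 1} : Set (Fin 2 → Fin 2 → ℝ))) (a x : Fin 2) :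
    D a x = 0 ∨ D a x = 1 := by
  simp only [Set.mem_insert_iff, Set.mem_singleton_iff] at hD
  rcases hD with rfl | rfl | rfl | rfl <;> exact PD_eq_zero_or_eq_one _ _ a x

lemma eq_weight_of_mul_add_mul_eq {p0 p1 u0 u1 c : ℝ} (hD0₀ : u0 = 0 ∨ u0 = 1)
    (hD1₀ : u1 = 0 ∨ u1 = 1) (hp : p0 + p1 = 1) (hc0 : c ≠ 0) (hc1 : c ≠ 1)
    (h : p0 * u0 + p1 * u1 = c) :
    (u0 = 1 ∧ u1 = 0 ∧ p0 = c) ∨ (u0 = 0 ∧ u1 = 1 ∧ p1 = c) := by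
  rcases hD0₀ with rfl | rfl <;> rcases hD1₀ with rfl | rfl <;> simp_all

lemma marginal_eq_of_decomposition {P : Fin 2 → Fin 2 → Fin 2 → Fin 2 → ℝ} {p0 p1 : ℝ}
    {D0 D1 Q0 Q1 : Fin 2 → Fin 2 → ℝ} (hQ0 : ∀ y, Q0 0 y + Q0 1 y = 1)
    (hQ1 : ∀ y, Q1 0 y + Q1 1 y = 1)
    (hP : ∀ a b x y, P a b x y = p0 * D0 a x * Q0 b y + p1 * D1 a x * Q1 b y) (a x y : Fin 2) :
    P a 0 x y + P a 1 x y = p0 * D0 a x + p1 * D1 a x := by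
  linear_combination hP a 0 x y + hP a 1 x y + p0 * D0 a x * hQ0 y + p1 * D1 a x * hQ1 y

lemma Pbox_marginal_one (x : Fin 2) : Pbox 1 0 x 0 + Pbox 1 1 x 0 = 1 / 4 := by
  fin_cases x <;> norm_num [Pbox]

/-- `P` has no LHV–LHS-type decomposition with two distinct
deterministic boxes for Alice and arbitrary conditional distributions for Bob. -/
theorem stmt_7 :
    ¬ ∃ (p0 p1 : ℝ) (D0 D1 Q0 Q1 : Fin 2 → Fin 2 → ℝ),
      0 ≤ p0 ∧ 0 ≤ p1 ∧ p0 + p1 = 1 ∧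
      D0 ∈ ({PD 0 0, PD 0 1, PD 1 0, PD 1 1} : Set (Fin 2 → Fin 2 → ℝ)) ∧
      D1 ∈ ({PD 0 0, PD 0 1, PD 1 0, PD 1 1} : Set (Fin 2 → Fin 2 → ℝ)) ∧
      D0 ≠ D1 ∧
      IsCondDistrib Q0 ∧ IsCondDistrib Q1 ∧
      ∀ a b x y : Fin 2, Pbox a b x y =
        p0 * D0 a x * Q0 b y + p1 * D1 a x * Q1 b y := by
  rintro ⟨p0, p1, D0, D1, Q0, Q1, -, -, hsum, hD0, hD1, -, ⟨-, hQ0⟩, ⟨-, hQ1⟩, hP⟩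
  have hone : ∀ x, (D0 1 x = 1 ∧ D1 1 x = 0 ∧ p0 = 1 / 4) ∨
      (D0 1 x = 0 ∧ D1 1 x = 1 ∧ p1 = 1 / 4) :=
    fun x ↦ eq_weight_of_mul_add_mul_eq (eq_zero_or_eq_one_of_mem_PD hD0 1 x)
      (eq_zero_or_eq_one_of_mem_PD hD1 1 x) hsum (by norm_num) (by norm_num)
      ((marginal_eq_of_decomposition hQ0 hQ1 hP 1 x 0).symm.trans (Pbox_marginal_one x))
  have hx₀ := hP 1 0 0 0
  have hx₁ := hP 1 1 1 0
  norm_num [Pbox] at hx₀ hx₁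
  rcases hone 0 with ⟨hD0₀, hD1₀, hw₀⟩ | ⟨hD0₀, hD1₀, hw₀⟩ <;>
    rcases hone 1 with ⟨hD0₁, hD1₁, hw₁⟩ | ⟨hD0₁, hD1₁, hw₁⟩
  · rw [hD0₀, hD1₀] at hx₀
    rw [hD0₁, hD1₁] at hx₁
    have : p0 = 0 := by linear_combination -p0 * hQ0 0 - hx₀ - hx₁
    linarith
  · linarith
  · linarith
  · rw [hD0₀, hD1₀] at hx₀
    rw [hD0₁, hD1₁] at hx₁
    have : p1 = 0 := by linear_combination -p1 * hQ1 0 - hx₀ - hx₁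
    linarith
end
end

section
/- There do not exist strictly positive weights p(0), p(1), p(2), p(3) with Σ_λ p(λ) = 1 and conditional distributions Q_0, Q_1, Q_2, Q_3 for Bob satisfying Q_0 = Q_1 = Q_2, such that P(a,b|x,y) = p(0) · P_D^{00}(a|x) · Q_0(b|y) + p(1) · P_D^{01}(a|x) · Q_1(b|y) + p(2) · P_D^{10}(a|x) · Q_2(b|y) + p(3) · P_D^{11}(a|x) · Q_3(b|y) for all a,b,x,y ∈ {0,1}. -/
open Matrix Kronecker ComplexOrder

noncomputable section

/-! Alice answers `a = 1` on input `x = 0` only under `λ = 1, 3`, and on input `x = 1` only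
under `λ = 1, 2`; since `P(1,0|0,0) = P(1,1|1,0) = 0` and `p 1 > 0`, the shared box
`Q = Q₀ = Q₁ = Q₂` would need `Q(0|0) = Q(1|0) = 0`. -/

lemma eq_zero_of_mul_add_mul_eq_zero {R : Type*} [Semiring R] [PartialOrder R]
    [IsOrderedRing R] [NoZeroDivisors R] {p q r s : R} (hp : 0 < p) (hq : 0 ≤ q)
    (hr : 0 ≤ r) (hs : 0 ≤ s) (h : p * q + r * s = 0) : q = 0 :=
  ((mul_eq_zero.1 ((add_eq_zero_iff_of_nonneg (mul_nonneg hp.le hq)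
    (mul_nonneg hr hs)).1 h).1).resolve_left hp.ne')

/-- `P` has no dimension-4 deterministic-Alice LHV–LHS-type
decomposition with Bob's boxes satisfying `Q₀ = Q₁ = Q₂`. -/
theorem stmt_9 :
    ¬ ∃ (p0 p1 p2 p3 : ℝ) (Q0 Q1 Q2 Q3 : Fin 2 → Fin 2 → ℝ),
      0 < p0 ∧ 0 < p1 ∧ 0 < p2 ∧ 0 < p3 ∧ p0 + p1 + p2 + p3 = 1 ∧
      IsCondDistrib Q0 ∧ IsCondDistrib Q1 ∧ IsCondDistrib Q2 ∧ IsCondDistrib Q3 ∧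
      Q0 = Q1 ∧ Q1 = Q2 ∧
      ∀ a b x y : Fin 2, Pbox a b x y =
        p0 * PD 0 0 a x * Q0 b y + p1 * PD 0 1 a x * Q1 b y
        + p2 * PD 1 0 a x * Q2 b y + p3 * PD 1 1 a x * Q3 b y := by
  rintro ⟨_, p1, p2, p3, Q, _, _, Q3, -, hp1, hp2, hp3, -, ⟨hQ, hQsum⟩, -, -, ⟨hQ3, -⟩,
    rfl, rfl, hP⟩
  have h₀ : p1 * Q 0 0 + p3 * Q3 0 0 = 0 := by simpa [Pbox, PD] using (hP 1 0 0 0).symm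
  have h₁ : p1 * Q 1 0 + p2 * Q 1 0 = 0 := by simpa [Pbox, PD] using (hP 1 1 1 0).symm
  have hQ00 := eq_zero_of_mul_add_mul_eq_zero hp1 (hQ 0 0) hp3.le (hQ3 0 0) h₀
  have hQ10 := eq_zero_of_mul_add_mul_eq_zero hp1 (hQ 1 0) hp2.le (hQ 1 0) h₁
  simpa [hQ00, hQ10] using hQsum 0
end
end

section
/- There do not exist strictly positive weights p(0), p(1), p(2), p(3) with Σ_λ p(λ) = 1 and conditional distributions Q_0, Q_1, Q_2, Q_3 for Bob satisfying Q_0 = Q_1 = Q_3, such that P(a,b|x,y) = p(0) · P_D^{00}(a|x) · Q_0(b|y) + p(1) · P_D^{01}(a|x) · Q_1(b|y) + p(2) · P_D^{10}(a|x) · Q_2(b|y) + p(3) · P_D^{11}(a|x) · Q_3(b|y) for all a,b,x,y ∈ {0,1}. -/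
open Matrix Kronecker ComplexOrder

noncomputable section

/-! Alice's output `a = 1` is produced at `x = 0` only by `λ = 1, 3` and at `x = 1, y = 0` only by
`λ = 1, 2`. As `P(1,0|0,0) = P(1,1|1,0) = 0` and `p(1) > 0`, the common box `Q` of `λ = 1` must
vanish on both outcomes at `y = 0`, contradicting normalization. -/

theorem eq_zero_of_mul_add_eq_zero {α : Type*} [Ring α] [LinearOrder α] [IsStrictOrderedRing α]
    {p q r : α} (hp : 0 < p) (hq : 0 ≤ q) (hr : 0 ≤ r) (h : p * q + r = 0) : q = 0 :=
  ((mul_eq_zero.1 ((add_eq_zero_iff_of_nonneg (mul_nonneg hp.le hq) hr).1 h).1).resolve_left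
    hp.ne')

/-- `P` has no dimension-4 deterministic-Alice LHV–LHS-type
decomposition with Bob's boxes satisfying `Q₀ = Q₁ = Q₃`. -/
theorem stmt_10 :
    ¬ ∃ (p0 p1 p2 p3 : ℝ) (Q0 Q1 Q2 Q3 : Fin 2 → Fin 2 → ℝ),
      0 < p0 ∧ 0 < p1 ∧ 0 < p2 ∧ 0 < p3 ∧ p0 + p1 + p2 + p3 = 1 ∧
      IsCondDistrib Q0 ∧ IsCondDistrib Q1 ∧ IsCondDistrib Q2 ∧ IsCondDistrib Q3 ∧
      Q0 = Q1 ∧ Q1 = Q3 ∧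
      ∀ a b x y : Fin 2, Pbox a b x y =
        p0 * PD 0 0 a x * Q0 b y + p1 * PD 0 1 a x * Q1 b y
        + p2 * PD 1 0 a x * Q2 b y + p3 * PD 1 1 a x * Q3 b y := by
  rintro ⟨_, p1, p2, p3, Q, _, Q2, _, -, hp1, hp2, hp3, -, ⟨hQ_nonneg, hQ_sum⟩, -,
    ⟨hQ2_nonneg, -⟩, -, rfl, rfl, hP⟩
  have hP1000 := hP 1 0 0 0
  have hP1110 := hP 1 1 1 0
  norm_num [Pbox, PD] at hP1000 hP1110
  have hQ00 : Q 0 0 = 0 :=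
    eq_zero_of_mul_add_eq_zero hp1 (hQ_nonneg 0 0) (mul_nonneg hp3.le (hQ_nonneg 0 0)) hP1000.symm
  have hQ10 : Q 1 0 = 0 :=
    eq_zero_of_mul_add_eq_zero hp1 (hQ_nonneg 1 0) (mul_nonneg hp2.le (hQ2_nonneg 1 0)) hP1110.symm
  simpa [hQ00, hQ10] using hQ_sum 0
end
end

section
/- There do not exist strictly positive weights p(0), p(1), p(2), p(3) with Σ_λ p(λ) = 1 and conditional distributions Q_0, Q_1, Q_2, Q_3 for Bob satisfying Q_1 = Q_2 = Q_3, such that P(a,b|x,y) = p(0) · P_D^{00}(a|x) · Q_0(b|y) + p(1) · P_D^{01}(a|x) · Q_1(b|y) + p(2) · P_D^{10}(a|x) · Q_2(b|y) + p(3) · P_D^{11}(a|x) · Q_3(b|y) for all a,b,x,y ∈ {0,1}. -/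
open Matrix Kronecker ComplexOrder

noncomputable section

/-! With `Q₁ = Q₂ = Q₃ = Q`, the outcome `a = 1` of Alice occurs only for hidden variables
`λ ∈ {1, 3}` on input `x = 0` and `λ ∈ {1, 2}` on input `x = 1`, and in all these cases Bob
answers with `Q`. Hence `P(1,b|0,y) = (p₁ + p₃) Q(b|y)` and `P(1,b|1,y) = (p₁ + p₂) Q(b|y)`.
Since `P(1,0|0,0) = 0` and `P(1,1|1,0) = 0`, both `Q(0|0)` and `Q(1|0)` vanish, contradicting
normalization. -/

lemma Pbox_one_zero_zero_zero : Pbox 1 0 0 0 = 0 := by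
  simp [Pbox]

lemma Pbox_one_one_one_zero : Pbox 1 1 1 0 = 0 := by
  simp [Pbox]

section Mixture

variable (p0 p1 p2 p3 : ℝ) (Q0 Q : Fin 2 → Fin 2 → ℝ) (b y : Fin 2)

lemma mixture_alice_one_input_zero :
    p0 * PD 0 0 1 0 * Q0 b y + p1 * PD 0 1 1 0 * Q b y
      + p2 * PD 1 0 1 0 * Q b y + p3 * PD 1 1 1 0 * Q b y = (p1 + p3) * Q b y := by
  simp [PD, add_mul]

lemma mixture_alice_one_input_one :
    p0 * PD 0 0 1 1 * Q0 b y + p1 * PD 0 1 1 1 * Q b y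
      + p2 * PD 1 0 1 1 * Q b y + p3 * PD 1 1 1 1 * Q b y = (p1 + p2) * Q b y := by
  simp [PD, add_mul]

end Mixture

/-- `P` has no dimension-4 deterministic-Alice LHV–LHS-type
decomposition with Bob's boxes satisfying `Q₁ = Q₂ = Q₃`. -/
theorem stmt_12 :
    ¬ ∃ (p0 p1 p2 p3 : ℝ) (Q0 Q1 Q2 Q3 : Fin 2 → Fin 2 → ℝ),
      0 < p0 ∧ 0 < p1 ∧ 0 < p2 ∧ 0 < p3 ∧ p0 + p1 + p2 + p3 = 1 ∧
      IsCondDistrib Q0 ∧ IsCondDistrib Q1 ∧ IsCondDistrib Q2 ∧ IsCondDistrib Q3 ∧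
      Q1 = Q2 ∧ Q2 = Q3 ∧
      ∀ a b x y : Fin 2, Pbox a b x y =
        p0 * PD 0 0 a x * Q0 b y + p1 * PD 0 1 a x * Q1 b y
        + p2 * PD 1 0 a x * Q2 b y + p3 * PD 1 1 a x * Q3 b y := by
  rintro ⟨p0, p1, p2, p3, Q0, Q, _, _, -, hp1, hp2, hp3, -, -, hQ, -, -, rfl, rfl, hP⟩
  have hQ00 : Q 0 0 = 0 := by
    have h := hP 1 0 0 0
    rw [Pbox_one_zero_zero_zero, mixture_alice_one_input_zero] at h
    exact (mul_eq_zero.1 h.symm).resolve_left (by positivity)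
  have hQ10 : Q 1 0 = 0 := by
    have h := hP 1 1 1 0
    rw [Pbox_one_one_one_zero, mixture_alice_one_input_one] at h
    exact (mul_eq_zero.1 h.symm).resolve_left (by positivity)
  simpa [hQ00, hQ10] using hQ.2 0
end
end

section
/- There do not exist strictly positive weights p(0), p(1), p(2), p(3) with Σ_λ p(λ) = 1 and conditional distributions Q_0, Q_1, Q_2, Q_3 for Bob satisfying Q_0 = Q_1 and Q_2 = Q_3, such that P(a,b|x,y) = p(0) · P_D^{00}(a|x) · Q_0(b|y) + p(1) · P_D^{01}(a|x) · Q_1(b|y) + p(2) · P_D^{10}(a|x) · Q_2(b|y) + p(3) · P_D^{11}(a|x) · Q_3(b|y) for all a,b,x,y ∈ {0,1}. -/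
open Matrix Kronecker ComplexOrder

noncomputable section

/-! Alice answers `a = 1` with probability zero both on `(x, y) = (0, 0)` with `b = 0` and on
`(x, y) = (1, 0)` with `b = 1`. The strategy `P_D^{01}` (Alice always answers `1`) contributes to
both entries with the positive weight `p(1)`, so `Q_1(·|0)` would have to vanish on both outcomes. -/

theorem left_eq_zero_of_mul_add_mul_eq_zero {p q a b : ℝ} (hp : 0 < p) (hq : 0 ≤ q)
    (ha : 0 ≤ a) (hb : 0 ≤ b) (h : p * a + q * b = 0) : a = 0 :=
  (mul_eq_zero.1 ((add_eq_zero_iff_of_nonneg (by positivity) (by positivity)).1 h).1).resolve_left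
    hp.ne'

/-- `P` has no dimension-4 deterministic-Alice LHV–LHS-type
decomposition with Bob's boxes satisfying `Q₀ = Q₁` and `Q₂ = Q₃`. -/
theorem stmt_13 :
    ¬ ∃ (p0 p1 p2 p3 : ℝ) (Q0 Q1 Q2 Q3 : Fin 2 → Fin 2 → ℝ),
      0 < p0 ∧ 0 < p1 ∧ 0 < p2 ∧ 0 < p3 ∧ p0 + p1 + p2 + p3 = 1 ∧
      IsCondDistrib Q0 ∧ IsCondDistrib Q1 ∧ IsCondDistrib Q2 ∧ IsCondDistrib Q3 ∧
      Q0 = Q1 ∧ Q2 = Q3 ∧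
      ∀ a b x y : Fin 2, Pbox a b x y =
        p0 * PD 0 0 a x * Q0 b y + p1 * PD 0 1 a x * Q1 b y
        + p2 * PD 1 0 a x * Q2 b y + p3 * PD 1 1 a x * Q3 b y := by
  rintro ⟨p0, p1, p2, p3, Q0, Q1, Q2, Q3, -, hp1, hp2, hp3, -, -, hQ1, hQ2, hQ3, -, -, hP⟩
  have hP1000 : p1 * Q1 0 0 + p3 * Q3 0 0 = 0 := by simpa [Pbox, PD] using (hP 1 0 0 0).symm
  have hP1110 : p1 * Q1 1 0 + p2 * Q2 1 0 = 0 := by simpa [Pbox, PD] using (hP 1 1 1 0).symm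
  have hQ1_sum := hQ1.2 0
  rw [left_eq_zero_of_mul_add_mul_eq_zero hp1 hp3.le (hQ1.1 0 0) (hQ3.1 0 0) hP1000,
    left_eq_zero_of_mul_add_mul_eq_zero hp1 hp2.le (hQ1.1 1 0) (hQ2.1 1 0) hP1110] at hQ1_sum
  norm_num at hQ1_sum
end
end

section
/- There do not exist strictly positive weights p(0), p(1), p(2), p(3) with Σ_λ p(λ) = 1 and conditional distributions Q_0, Q_1, Q_2, Q_3 for Bob satisfying Q_0 = Q_2 and Q_1 = Q_3, such that P(a,b|x,y) = p(0) · P_D^{00}(a|x) · Q_0(b|y) + p(1) · P_D^{01}(a|x) · Q_1(b|y) + p(2) · P_D^{10}(a|x) · Q_2(b|y) + p(3) · P_D^{11}(a|x) · Q_3(b|y) for all a,b,x,y ∈ {0,1}. -/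
open Matrix Kronecker ComplexOrder

noncomputable section

/-! With `Q₀ = Q₂` and `Q₁ = Q₃`, Alice's outcome `a = 1` at `x = 0` comes only from `λ ∈ {1, 3}`,
both paired with Bob's box `Q₁`, so `P(1,0|0,0) = 0` forces `Q₁(0|0) = 0`, i.e. `Q₁(1|0) = 1`.
At `x = 1` the outcome `a = 1` comes from `λ ∈ {1, 2}`, hence `P(1,1|1,0) ≥ p(1) Q₁(1|0) = p(1) > 0`,
contradicting `P(1,1|1,0) = 0`. -/

/-- `P` has no dimension-4 deterministic-Alice LHV–LHS-type
decomposition with Bob's boxes satisfying `Q₀ = Q₂` and `Q₁ = Q₃`. -/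
theorem stmt_14 :
    ¬ ∃ (p0 p1 p2 p3 : ℝ) (Q0 Q1 Q2 Q3 : Fin 2 → Fin 2 → ℝ),
      0 < p0 ∧ 0 < p1 ∧ 0 < p2 ∧ 0 < p3 ∧ p0 + p1 + p2 + p3 = 1 ∧
      IsCondDistrib Q0 ∧ IsCondDistrib Q1 ∧ IsCondDistrib Q2 ∧ IsCondDistrib Q3 ∧
      Q0 = Q2 ∧ Q1 = Q3 ∧
      ∀ a b x y : Fin 2, Pbox a b x y =
        p0 * PD 0 0 a x * Q0 b y + p1 * PD 0 1 a x * Q1 b y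
        + p2 * PD 1 0 a x * Q2 b y + p3 * PD 1 1 a x * Q3 b y := by
  rintro ⟨p0, p1, p2, p3, Q0, Q1, _, _, -, hp1, hp2, hp3, -,
    hQ0, hQ1, -, -, rfl, rfl, hP⟩
  have hP1000 : (p1 + p3) * Q1 0 0 = 0 := by
    have := hP 1 0 0 0
    norm_num [Pbox, PD] at this
    linarith
  have hP1110 : p1 * Q1 1 0 + p2 * Q0 1 0 = 0 := by
    have := hP 1 1 1 0
    norm_num [Pbox, PD] at this
    linarith
  have hQ1_zero : Q1 0 0 = 0 := (mul_eq_zero.1 hP1000).resolve_left (by positivity)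
  have hQ1_one : Q1 1 0 = 1 := by linarith [hQ1.2 0]
  rw [hQ1_one, mul_one] at hP1110
  linarith [mul_nonneg hp2.le (hQ0.1 1 0)]
end
end

section
/- There do not exist three pairwise distinct deterministic one-party boxes D_0, D_1, D_2 ∈ {P_D^{00}, P_D^{01}, P_D^{10}, P_D^{11}} for Alice, strictly positive weights p(0), p(1), p(2) with Σ_λ p(λ) = 1, and conditional distributions Q_0, Q_1, Q_2 for Bob with at least two of Q_0, Q_1, Q_2 equal, such that P(a,b|x,y) = Σ_{λ∈{0,1,2}} p(λ) · D_λ(a|x) · Q_λ(b|y) for all a,b,x,y ∈ {0,1}. Consequently, no LHV-LHS decomposition of P with hidden-variable dimension 3 and deterministic Alice strategies can be reduced to dimension 2 by merging values of the hidden variable with equal Bob boxes. -/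
open Matrix Kronecker ComplexOrder

noncomputable section

/-!
Two entries of `P` vanish: `P(1,0|0,0) = 0` and `P(1,1|1,0) = 0`. Since all weights are positive,
every hidden value whose Alice box outputs `a = 1` on `x = 0` has `Q(0|0) = 0`, and every one whose
box outputs `a = 1` on `x = 1` has `Q(1|0) = 0`. This excludes `P_D^{01}`, and forces `Q(0|0) = 0`
for `P_D^{11}` and `Q(0|0) = 1` for `P_D^{10}`. If the Alice boxes are distinct, the entries
`P(0,0|1,0) = P(0,1|0,0) = 1/4` then isolate the term of `P_D^{00}`, so there `0 < Q(0|0) < 1`.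
Thus `Q(0|0)` determines the Alice box, and distinct Alice boxes come with distinct Bob boxes.
-/

def detBoxes : Set (Fin 2 → Fin 2 → ℝ) := {PD 0 0, PD 0 1, PD 1 0, PD 1 1}

lemma PD_nonneg (α β a x : Fin 2) : 0 ≤ PD α β a x := by
  unfold PD; split_ifs <;> norm_num

lemma nonneg_of_mem_detBoxes {D : Fin 2 → Fin 2 → ℝ} (hD : D ∈ detBoxes) (a x : Fin 2) :
    0 ≤ D a x := by
  obtain rfl | rfl | rfl | rfl := hD <;> exact PD_nonneg ..

structure IsDetLHSModel {ι : Type*} [Fintype ι] (P : Fin 2 → Fin 2 → Fin 2 → Fin 2 → ℝ)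
    (p : ι → ℝ) (D Q : ι → Fin 2 → Fin 2 → ℝ) : Prop where
  weight_pos : ∀ i, 0 < p i
  alice_mem : ∀ i, D i ∈ detBoxes
  bob_cond : ∀ i, IsCondDistrib (Q i)
  decomp : ∀ a b x y, P a b x y = ∑ i, p i * D i a x * Q i b y

namespace IsDetLHSModel

variable {ι : Type*} [Fintype ι] {p : ι → ℝ} {D Q : ι → Fin 2 → Fin 2 → ℝ}

lemma Q_eq_zero_of_entry_eq_zero {P : Fin 2 → Fin 2 → Fin 2 → Fin 2 → ℝ}
    (h : IsDetLHSModel P p D Q) {a b x y : Fin 2} (hP : P a b x y = 0) {i : ι}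
    (hi : D i a x ≠ 0) : Q i b y = 0 := by
  rw [h.decomp, Finset.sum_eq_zero_iff_of_nonneg fun k _ =>
    mul_nonneg (mul_nonneg (h.weight_pos k).le (nonneg_of_mem_detBoxes (h.alice_mem k) a x))
      ((h.bob_cond k).1 b y)] at hP
  simpa [(h.weight_pos i).ne', hi] using hP i (Finset.mem_univ i)

lemma Q_zero_zero_eq_zero (h : IsDetLHSModel Pbox p D Q) {i : ι} (hi : D i 1 0 ≠ 0) :
    Q i 0 0 = 0 :=
  h.Q_eq_zero_of_entry_eq_zero (by norm_num [Pbox]) hi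

lemma Q_one_zero_eq_zero (h : IsDetLHSModel Pbox p D Q) {i : ι} (hi : D i 1 1 ≠ 0) :
    Q i 1 0 = 0 :=
  h.Q_eq_zero_of_entry_eq_zero (by norm_num [Pbox]) hi

lemma ne_PD_zero_one (h : IsDetLHSModel Pbox p D Q) (i : ι) : D i ≠ PD 0 1 := by
  intro hi
  have h0 := h.Q_zero_zero_eq_zero (i := i) (by simp [hi, PD])
  have h1 := h.Q_one_zero_eq_zero (i := i) (by simp [hi, PD])
  have := (h.bob_cond i).2 0
  simp_all

lemma eq_PD_one_zero_or_eq_PD_one_one (h : IsDetLHSModel Pbox p D Q) {i : ι}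
    (hi : D i ≠ PD 0 0) : D i = PD 1 0 ∨ D i = PD 1 1 := by
  obtain h' | h' | h' | h' := h.alice_mem i
  exacts [absurd h' hi, absurd h' (h.ne_PD_zero_one i), .inl h', .inr h']

lemma Q_zero_zero_eq_one (h : IsDetLHSModel Pbox p D Q) {i : ι} (hi : D i = PD 1 0) :
    Q i 0 0 = 1 := by
  have h1 := h.Q_one_zero_eq_zero (i := i) (by simp [hi, PD])
  linarith [(h.bob_cond i).2 0]

lemma Q_zero_zero_ne_zero (h : IsDetLHSModel Pbox p D Q) (hinj : Function.Injective D)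
    {i : ι} (hi : D i = PD 0 0) : Q i 0 0 ≠ 0 := by
  have hterm : Pbox 0 0 1 0 = p i * Q i 0 0 := by
    rw [h.decomp, Finset.sum_eq_single i]
    · simp [hi, PD]
    · intro k _ hk
      rcases h.eq_PD_one_zero_or_eq_PD_one_one (hi ▸ hinj.ne hk) with hk' | hk'
      · simp [hk', PD]
      · simp [h.Q_zero_zero_eq_zero (i := k) (by simp [hk', PD])]
    · simp
  intro h0
  norm_num [h0, Pbox] at hterm

lemma Q_one_zero_ne_zero (h : IsDetLHSModel Pbox p D Q) (hinj : Function.Injective D)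
    {i : ι} (hi : D i = PD 0 0) : Q i 1 0 ≠ 0 := by
  have hterm : Pbox 0 1 0 0 = p i * Q i 1 0 := by
    rw [h.decomp, Finset.sum_eq_single i]
    · simp [hi, PD]
    · intro k _ hk
      rcases h.eq_PD_one_zero_or_eq_PD_one_one (hi ▸ hinj.ne hk) with hk' | hk'
      · simp [h.Q_one_zero_eq_zero (i := k) (by simp [hk', PD])]
      · simp [hk', PD]
    · simp
  intro h0
  norm_num [h0, Pbox] at hterm

lemma alice_box_cases (h : IsDetLHSModel Pbox p D Q) (hinj : Function.Injective D) (i : ι) :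
    (D i = PD 0 0 ∧ Q i 0 0 ≠ 0 ∧ Q i 0 0 ≠ 1) ∨ (D i = PD 1 0 ∧ Q i 0 0 = 1) ∨
      (D i = PD 1 1 ∧ Q i 0 0 = 0) := by
  by_cases h00 : D i = PD 0 0
  · refine .inl ⟨h00, h.Q_zero_zero_ne_zero hinj h00, fun h1 => ?_⟩
    exact h.Q_one_zero_ne_zero hinj h00 (by linarith [(h.bob_cond i).2 0])
  · rcases h.eq_PD_one_zero_or_eq_PD_one_one h00 with h10 | h11
    · exact .inr (.inl ⟨h10, h.Q_zero_zero_eq_one h10⟩)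
    · exact .inr (.inr ⟨h11, h.Q_zero_zero_eq_zero (by simp [h11, PD])⟩)

theorem Q_injective (h : IsDetLHSModel Pbox p D Q) (hinj : Function.Injective D) :
    Function.Injective Q := by
  intro i j hij
  have hq : Q i 0 0 = Q j 0 0 := by rw [hij]
  apply hinj
  rcases h.alice_box_cases hinj i with ⟨hi, hi0, hi1⟩ | ⟨hi, hiq⟩ | ⟨hi, hiq⟩ <;>
    rcases h.alice_box_cases hinj j with ⟨hj, hj0, hj1⟩ | ⟨hj, hjq⟩ | ⟨hj, hjq⟩ <;>
    simp_all

end IsDetLHSModel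

/-- `P` has no dimension-3 deterministic-Alice LHV–LHS-type
decomposition (with pairwise distinct deterministic Alice boxes) in which at
least two of Bob's boxes coincide. -/
theorem stmt_16 :
    ¬ ∃ (p0 p1 p2 : ℝ) (D0 D1 D2 Q0 Q1 Q2 : Fin 2 → Fin 2 → ℝ),
      D0 ∈ ({PD 0 0, PD 0 1, PD 1 0, PD 1 1} : Set (Fin 2 → Fin 2 → ℝ)) ∧
      D1 ∈ ({PD 0 0, PD 0 1, PD 1 0, PD 1 1} : Set (Fin 2 → Fin 2 → ℝ)) ∧
      D2 ∈ ({PD 0 0, PD 0 1, PD 1 0, PD 1 1} : Set (Fin 2 → Fin 2 → ℝ)) ∧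
      D0 ≠ D1 ∧ D0 ≠ D2 ∧ D1 ≠ D2 ∧
      0 < p0 ∧ 0 < p1 ∧ 0 < p2 ∧ p0 + p1 + p2 = 1 ∧
      IsCondDistrib Q0 ∧ IsCondDistrib Q1 ∧ IsCondDistrib Q2 ∧
      (Q0 = Q1 ∨ Q0 = Q2 ∨ Q1 = Q2) ∧
      ∀ a b x y : Fin 2, Pbox a b x y =
        p0 * D0 a x * Q0 b y + p1 * D1 a x * Q1 b y + p2 * D2 a x * Q2 b y := by
  rintro ⟨p0, p1, p2, D0, D1, D2, Q0, Q1, Q2, hD0, hD1, hD2, hD01, hD02, hD12,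
    hp0, hp1, hp2, -, hQ0, hQ1, hQ2, hQeq, hP⟩
  have h : IsDetLHSModel Pbox ![p0, p1, p2] ![D0, D1, D2] ![Q0, Q1, Q2] :=
    { weight_pos := fun i => by fin_cases i <;> assumption
      alice_mem := fun i => by fin_cases i <;> assumption
      bob_cond := fun i => by fin_cases i <;> assumption
      decomp := fun a b x y => by simp [hP, Fin.sum_univ_three] }
  have hinj : Function.Injective ![D0, D1, D2] := by
    intro i j hij
    fin_cases i <;> fin_cases j <;> simp_all [eq_comm]
  have hQinj := h.Q_injective hinj
  rcases hQeq with hQ | hQ | hQ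
  · exact absurd (hQinj (a₁ := 0) (a₂ := 1) hQ) (by decide)
  · exact absurd (hQinj (a₁ := 0) (a₂ := 2) hQ) (by decide)
  · exact absurd (hQinj (a₁ := 1) (a₂ := 2) hQ) (by decide)
end
end

section
/- There do not exist strictly positive weights p(0), p(1), p(2) with Σ_λ p(λ) = 1 and conditional distributions Q_0, Q_1, Q_2 for Bob satisfying Q_1 = Q_2, such that P(a,b|x,y) = p(0) · P_D^{00}(a|x) · Q_0(b|y) + p(1) · P_D^{01}(a|x) · Q_1(b|y) + p(2) · P_D^{10}(a|x) · Q_2(b|y) for all a,b,x,y ∈ {0,1}. -/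
open Matrix Kronecker ComplexOrder

noncomputable section

/-- `P` has no dimension-3 deterministic-Alice LHV–LHS-type
decomposition with Bob's boxes satisfying `Q1 = Q2`. -/
theorem stmt_18 :
    ¬ ∃ (p0 p1 p2 : ℝ) (Q0 Q1 Q2 : Fin 2 → Fin 2 → ℝ),
      0 < p0 ∧ 0 < p1 ∧ 0 < p2 ∧ p0 + p1 + p2 = 1 ∧
      IsCondDistrib Q0 ∧ IsCondDistrib Q1 ∧ IsCondDistrib Q2 ∧
      Q1 = Q2 ∧
      ∀ a b x y : Fin 2, Pbox a b x y =
        p0 * PD 0 0 a x * Q0 b y + p1 * PD 0 1 a x * Q1 b y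
        + p2 * PD 1 0 a x * Q2 b y := by
  rintro ⟨p0, p1, p2, Q0, Q1, Q2, -, hp1, -, -, -, -, -, rfl, hP⟩
  -- Only `λ = 1` makes Alice output `a = 1` on `x = 0`, while both `λ = 1, 2` do on `x = 1`.
  have h_x0 : (0 : ℝ) = p1 * Q1 0 0 := by simpa [Pbox, PD] using hP 1 0 0 0
  have h_x1 : (1 / 4 : ℝ) = p1 * Q1 0 0 + p2 * Q1 0 0 := by simpa [Pbox, PD] using hP 1 0 1 0
  have hQ : Q1 0 0 = 0 := (mul_eq_zero.mp h_x0.symm).resolve_left hp1.ne'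
  norm_num [hQ] at h_x1
end
end

section
/- There do not exist strictly positive weights p(0), p(1), p(2) with Σ_λ p(λ) = 1 and conditional distributions Q_0, Q_1, Q_2 for Bob satisfying Q_0 = Q_2, such that P(a,b|x,y) = p(0) · P_D^{00}(a|x) · Q_0(b|y) + p(1) · P_D^{01}(a|x) · Q_1(b|y) + p(2) · P_D^{10}(a|x) · Q_2(b|y) for all a,b,x,y ∈ {0,1}. -/
open Matrix Kronecker ComplexOrder

noncomputable section

/-! On input `x = 0` only the hidden state `λ = 1` lets Alice answer `a = 1`, so
`P(1,0|0,0) = 0` forces `Q₁(0|0) = 0`. On input `x = 1` Alice answers `a = 1` under `λ = 1`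
and `λ = 2`, so `P(1,1|1,0) = 0` forces `Q₁(1|0) = 0`. Then `Q₁(·|0)` is not normalised. -/

theorem IsCondDistrib.not_forall_eq_zero {Q : Fin 2 → Fin 2 → ℝ} (hQ : IsCondDistrib Q)
    (y : Fin 2) : ¬ ∀ b, Q b y = 0 := fun h => by
  simpa [h] using hQ.2 y

/-- `P` has no dimension-3 deterministic-Alice LHV–LHS-type
decomposition with Bob's boxes satisfying `Q0 = Q2`. -/
theorem stmt_19 :
    ¬ ∃ (p0 p1 p2 : ℝ) (Q0 Q1 Q2 : Fin 2 → Fin 2 → ℝ),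
      0 < p0 ∧ 0 < p1 ∧ 0 < p2 ∧ p0 + p1 + p2 = 1 ∧
      IsCondDistrib Q0 ∧ IsCondDistrib Q1 ∧ IsCondDistrib Q2 ∧
      Q0 = Q2 ∧
      ∀ a b x y : Fin 2, Pbox a b x y =
        p0 * PD 0 0 a x * Q0 b y + p1 * PD 0 1 a x * Q1 b y
        + p2 * PD 1 0 a x * Q2 b y := by
  rintro ⟨p0, p1, p2, Q0, Q1, Q2, -, hp1, hp2, -, -, hQ1, hQ2, -, hP⟩
  have hQ1_00 : Q1 0 0 = 0 := by
    have h := hP 1 0 0 0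
    norm_num [Pbox, PD] at h
    exact h.resolve_left hp1.ne'
  have hQ1_10 : Q1 1 0 = 0 := by
    have h := hP 1 1 1 0
    norm_num [Pbox, PD] at h
    have h' := (add_eq_zero_iff_of_nonneg (mul_nonneg hp1.le (hQ1.1 1 0))
      (mul_nonneg hp2.le (hQ2.1 1 0))).1 h.symm
    exact (mul_eq_zero.1 h'.1).resolve_left hp1.ne'
  exact hQ1.not_forall_eq_zero 0 fun b => by fin_cases b <;> assumption
end
end
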